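/- Two spectral spaces X1 and X2 are homeomorphic if and only if 𝒳(X1) and 𝒳(X2) are homeomorphic. -/

import Mathlib

open Set TopologicalSpace Topology

/-- A subset of a topological space is *inverse-closed* if it is an intersection of a
family of quasi-compact open subsets. -/
def InvClosed {X : Type*} [TopologicalSpace X] (Y : Set X) : Prop :=
  ∃ 𝒪 : Set (Set X), (∀ U ∈ 𝒪, IsOpen U ∧ IsCompact U) ∧ Y = ⋂₀ 𝒪

/-- A subset is *saturated* if it is an intersection of open sets. -/
def IsSatd {X : Type*} [TopologicalSpace X] (Y : Set X) : Prop :=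
  ∃ 𝒪 : Set (Set X), (∀ U ∈ 𝒪, IsOpen U) ∧ Y = ⋂₀ 𝒪

/-- A topological space is *spectral* if it is T0, quasi-compact, sober, and the
quasi-compact open subsets form a basis closed under finite intersections. -/
def IsSpectralSpace (X : Type*) [TopologicalSpace X] : Prop :=
  T0Space X ∧ CompactSpace X ∧ QuasiSober X ∧
    IsTopologicalBasis {U : Set X | IsOpen U ∧ IsCompact U} ∧
    ∀ U V : Set X, IsOpen U → IsCompact U → IsOpen V → IsCompact V → IsCompact (U ∩ V)

/-- `𝒳(X)`: the nonempty inverse-closed subsets of `X`. -/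
abbrev XCal (X : Type*) [TopologicalSpace X] : Type _ :=
  {Y : Set X // Y.Nonempty ∧ InvClosed Y}

/-- The Zariski topology on `𝒳(X)`, with basic open sets `𝒰(Ω) = {Y : Y ⊆ Ω}` for `Ω`
quasi-compact open in `X`. -/
instance XCal.instTop (X : Type*) [TopologicalSpace X] : TopologicalSpace (XCal X) :=
  generateFrom {S : Set (XCal X) | ∃ Ω : Set X, IsOpen Ω ∧ IsCompact Ω ∧
    S = {Y : XCal X | (Y : Set X) ⊆ Ω}}

/-- The specialization-type order: `x ≤ y` iff `y ∈ closure {x}`. -/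
def spord {X : Type*} [TopologicalSpace X] (x y : X) : Prop := y ∈ closure {x}

/-- Closure under generizations of a set `S`: all points `z ≤ s` for some `s ∈ S`. -/
def genOf {X : Type*} [TopologicalSpace X] (S : Set X) : Set X :=
  {z : X | ∃ s ∈ S, spord z s}

/-- A map is *spectral* if preimages of quasi-compact open sets are quasi-compact open. -/
def SpecMap {X Y : Type*} [TopologicalSpace X] [TopologicalSpace Y] (f : X → Y) : Prop :=
  ∀ Ω : Set Y, IsOpen Ω → IsCompact Ω → IsOpen (f ⁻¹' Ω) ∧ IsCompact (f ⁻¹' Ω)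

/-- The constructible topology on a spectral space: generated by the quasi-compact open
sets together with their complements. -/
def constructibleTop (X : Type*) [TopologicalSpace X] : TopologicalSpace X :=
  generateFrom ({U : Set X | IsOpen U ∧ IsCompact U} ∪
    {S : Set X | ∃ U : Set X, IsOpen U ∧ IsCompact U ∧ S = Uᶜ})

/-- `s` is the supremum of `S` for the order induced by the topology. -/
def IsSupOf {X : Type*} [TopologicalSpace X] (S : Set X) (s : X) : Prop :=
  (∀ c ∈ S, spord c s) ∧ ∀ t : X, (∀ c ∈ S, spord c t) → spord s t

/-- A map is sup-preserving if it sends existing finite suprema to suprema. -/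
def SupPreserving {X Y : Type*} [TopologicalSpace X] [TopologicalSpace Y] (f : X → Y) : Prop :=
  ∀ F : Set X, F.Finite → ∀ s : X, IsSupOf F s → IsSupOf (f '' F) (f s)

/-- A map is open onto its image. -/
def OpenOntoImage {X Y : Type*} [TopologicalSpace X] [TopologicalSpace Y] (f : X → Y) : Prop :=
  ∀ V : Set X, IsOpen V → ∃ W : Set Y, IsOpen W ∧ f '' V = W ∩ Set.range f

/-!
In `𝒳(X)` the specialization order is inclusion, so the sup-irreducible elements (those that are
not the join of two strictly smaller ones) form a subspace that every homeomorphism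
`𝒳(X₁) ≃ₜ 𝒳(X₂)` preserves. For `X` spectral these are exactly the sets of generizations `genOf {x}`:
a sup-irreducible `Y` is prime for the quasi-compact opens, and sobriety yields a point `x` lying in
exactly the quasi-compact opens that contain `Y`. Since `x ↦ genOf {x}` embeds `X` into `𝒳(X)`,
`X` is recovered from `𝒳(X)` up to homeomorphism.
-/

section InverseClosed

variable {X : Type*} [TopologicalSpace X]

lemma mem_genOf_singleton_iff {x z : X} : z ∈ genOf {x} ↔ z ⤳ x := by
  simp [genOf, spord, specializes_iff_mem_closure]

lemma genOf_singleton_subset_iff {x : X} {U : Set X} (hU : IsOpen U) :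
    genOf {x} ⊆ U ↔ x ∈ U :=
  ⟨fun h => h (mem_genOf_singleton_iff.2 specializes_rfl),
    fun hx _ hz => (mem_genOf_singleton_iff.1 hz).mem_open hU hx⟩

lemma invClosed_genOf_singleton (hb : IsTopologicalBasis {U : Set X | IsOpen U ∧ IsCompact U})
    (x : X) : InvClosed (genOf {x}) := by
  refine ⟨{U | (IsOpen U ∧ IsCompact U) ∧ x ∈ U}, fun U hU => hU.1, ?_⟩
  ext z
  rw [mem_genOf_singleton_iff, hb.nhds_hasBasis.specializes_iff]
  rfl

lemma InvClosed.subset_iff {Y Z : Set X} (hZ : InvClosed Z) :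
    Y ⊆ Z ↔ ∀ U, IsOpen U → IsCompact U → Z ⊆ U → Y ⊆ U := by
  obtain ⟨𝒪, h𝒪, rfl⟩ := hZ
  exact ⟨fun hYZ U _ _ hZU => hYZ.trans hZU,
    fun h => subset_sInter fun U hU => h U (h𝒪 U hU).1 (h𝒪 U hU).2 (sInter_subset_of_mem hU)⟩

lemma InvClosed.genOf_singleton_subset {A : Set X} {x : X} (hA : InvClosed A) (hx : x ∈ A) :
    genOf {x} ⊆ A :=
  hA.subset_iff.2 fun _ hUo _ hAU => (genOf_singleton_subset_iff hUo).2 (hAU hx)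

lemma InvClosed.eq_of_forall_subset_iff {Y Z : Set X} (hY : InvClosed Y) (hZ : InvClosed Z)
    (h : ∀ U, IsOpen U → IsCompact U → (Y ⊆ U ↔ Z ⊆ U)) : Y = Z :=
  subset_antisymm (hZ.subset_iff.2 fun U hUo hUc => (h U hUo hUc).2)
    (hY.subset_iff.2 fun U hUo hUc => (h U hUo hUc).1)

lemma InvClosed.union {Y Z : Set X} (hY : InvClosed Y) (hZ : InvClosed Z) :
    InvClosed (Y ∪ Z) := by
  obtain ⟨𝒪, h𝒪, rfl⟩ := hY
  obtain ⟨𝒬, h𝒬, rfl⟩ := hZ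
  refine ⟨(fun p => p.1 ∪ p.2) '' 𝒪 ×ˢ 𝒬, ?_, by rw [sInter_union_sInter, sInter_image]⟩
  rintro _ ⟨⟨U, V⟩, ⟨hU, hV⟩, rfl⟩
  exact ⟨(h𝒪 U hU).1.union (h𝒬 V hV).1, (h𝒪 U hU).2.union (h𝒬 V hV).2⟩

lemma InvClosed.inter {Y U : Set X} (hY : InvClosed Y) (hUo : IsOpen U) (hUc : IsCompact U)
    (hI : ∀ U V : Set X, IsOpen U → IsCompact U → IsOpen V → IsCompact V → IsCompact (U ∩ V)) :
    InvClosed (Y ∩ U) := by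
  obtain ⟨𝒪, h𝒪, rfl⟩ := hY
  refine ⟨insert U ((· ∩ U) '' 𝒪), ?_, ?_⟩
  · rintro V (rfl | ⟨W, hW, rfl⟩)
    · exact ⟨hUo, hUc⟩
    · exact ⟨(h𝒪 W hW).1.inter hUo, hI W U (h𝒪 W hW).1 (h𝒪 W hW).2 hUo hUc⟩
  · ext z
    simp only [sInter_insert, sInter_image, mem_inter_iff, mem_sInter, mem_iInter]
    grind

lemma InvClosed.preimage {X' : Type*} [TopologicalSpace X'] {f : X → X'} (hf : SpecMap f)
    {Y : Set X'} (hY : InvClosed Y) : InvClosed (f ⁻¹' Y) := by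
  obtain ⟨𝒪, h𝒪, rfl⟩ := hY
  refine ⟨(f ⁻¹' ·) '' 𝒪, ?_, by rw [preimage_sInter, sInter_image]⟩
  rintro _ ⟨U, hU, rfl⟩
  exact hf U (h𝒪 U hU).1 (h𝒪 U hU).2

lemma Homeomorph.specMap {X' : Type*} [TopologicalSpace X'] (e : X ≃ₜ X') : SpecMap e :=
  fun _ hΩo hΩc => ⟨hΩo.preimage e.continuous, e.isCompact_preimage.2 hΩc⟩

end InverseClosed

namespace XCal

variable {X : Type*} [TopologicalSpace X]

lemma isOpen_setOf_subset {Ω : Set X} (hΩo : IsOpen Ω) (hΩc : IsCompact Ω) :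
    IsOpen {Y : XCal X | (Y : Set X) ⊆ Ω} :=
  GenerateOpen.basic _ ⟨Ω, hΩo, hΩc, rfl⟩

lemma continuous_iff {A : Type*} [TopologicalSpace A] {f : A → XCal X} :
    Continuous f ↔ ∀ Ω : Set X, IsOpen Ω → IsCompact Ω →
      IsOpen (f ⁻¹' {Y : XCal X | (Y : Set X) ⊆ Ω}) := by
  refine continuous_generateFrom_iff.trans ⟨fun h Ω hΩo hΩc => h _ ⟨Ω, hΩo, hΩc, rfl⟩, ?_⟩
  rintro h _ ⟨Ω, hΩo, hΩc, rfl⟩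
  exact h Ω hΩo hΩc

lemma specializes_iff {Y Z : XCal X} : Y ⤳ Z ↔ (Y : Set X) ⊆ Z := by
  refine ⟨fun h => Z.2.2.subset_iff.2 fun U hUo hUc hZU =>
    h.mem_open (isOpen_setOf_subset hUo hUc) hZU, fun h => ?_⟩
  rw [specializes_iff_nhds]
  change @nhds _ (generateFrom _) Y ≤ @nhds _ (generateFrom _) Z
  rw [nhds_generateFrom, nhds_generateFrom]
  refine biInf_mono ?_
  rintro _ ⟨hZ, Ω, hΩo, hΩc, rfl⟩
  exact ⟨h.trans hZ, Ω, hΩo, hΩc, rfl⟩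

def map {X' : Type*} [TopologicalSpace X'] (e : X ≃ₜ X') (Y : XCal X) : XCal X' :=
  ⟨e '' Y, Y.2.1.image e, e.image_eq_preimage_symm Y ▸ Y.2.2.preimage e.symm.specMap⟩

lemma continuous_map {X' : Type*} [TopologicalSpace X'] (e : X ≃ₜ X') : Continuous (map e) :=
  continuous_iff.2 fun Ω hΩo hΩc => by
    simpa only [map, preimage_ofPred_eq, image_subset_iff] using
      isOpen_setOf_subset (hΩo.preimage e.continuous) (e.isCompact_preimage.2 hΩc)

def ofPoint (hb : IsTopologicalBasis {U : Set X | IsOpen U ∧ IsCompact U}) (x : X) : XCal X :=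
  ⟨genOf {x}, ⟨x, mem_genOf_singleton_iff.2 specializes_rfl⟩, invClosed_genOf_singleton hb x⟩

lemma preimage_ofPoint_setOf_subset (hb : IsTopologicalBasis {U : Set X | IsOpen U ∧ IsCompact U})
    {Ω : Set X} (hΩ : IsOpen Ω) : ofPoint hb ⁻¹' {Y | (Y : Set X) ⊆ Ω} = Ω :=
  ext fun _ => genOf_singleton_subset_iff hΩ

lemma isEmbedding_ofPoint [T0Space X]
    (hb : IsTopologicalBasis {U : Set X | IsOpen U ∧ IsCompact U}) :
    IsEmbedding (ofPoint hb) := by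
  have hind : IsInducing (ofPoint hb) := by
    refine ⟨hb.eq_generateFrom.trans ?_⟩
    change _ = induced _ (generateFrom _)
    rw [induced_generateFrom_eq]
    congr 1
    ext U
    constructor
    · intro hU
      exact ⟨_, ⟨U, hU.1, hU.2, rfl⟩, preimage_ofPoint_setOf_subset hb hU.1⟩
    · rintro ⟨_, ⟨Ω, hΩo, hΩc, rfl⟩, rfl⟩
      rw [preimage_ofPoint_setOf_subset hb hΩo]
      exact ⟨hΩo, hΩc⟩
  exact ⟨hind, hind.injective⟩

end XCal

def Homeomorph.xcalCongr {X X' : Type*} [TopologicalSpace X] [TopologicalSpace X']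
    (e : X ≃ₜ X') : XCal X ≃ₜ XCal X' where
  toFun := XCal.map e
  invFun := XCal.map e.symm
  left_inv Y := Subtype.ext (e.symm_image_image Y)
  right_inv Y := Subtype.ext (e.image_symm_image Y)
  continuous_toFun := XCal.continuous_map e
  continuous_invFun := XCal.continuous_map e.symm

def IsSupIrreducible {T : Type*} [TopologicalSpace T] (y : T) : Prop :=
  ∀ a b : T, a ⤳ y → b ⤳ y → (∀ z, a ⤳ z → b ⤳ z → y ⤳ z) → y = a ∨ y = b

lemma Homeomorph.isSupIrreducible_apply_iff {S T : Type*} [TopologicalSpace S]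
    [TopologicalSpace T] (φ : S ≃ₜ T) {y : S} : IsSupIrreducible (φ y) ↔ IsSupIrreducible y := by
  simp only [IsSupIrreducible, φ.surjective.forall, φ.isInducing.specializes_iff,
    φ.injective.eq_iff]

def IsCompactOpenPrime {X : Type*} [TopologicalSpace X] (Y : Set X) : Prop :=
  ∀ U V : Set X, IsOpen U → IsCompact U → IsOpen V → IsCompact V → Y ⊆ U ∪ V → Y ⊆ U ∨ Y ⊆ V

theorem IsCompactOpenPrime.exists_forall_subset_iff_mem {X : Type*} [TopologicalSpace X]
    [CompactSpace X] [QuasiSober X]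
    (hb : IsTopologicalBasis {U : Set X | IsOpen U ∧ IsCompact U})
    (hI : ∀ U V : Set X, IsOpen U → IsCompact U → IsOpen V → IsCompact V → IsCompact (U ∩ V))
    {Y : Set X} (hY : Y.Nonempty) (hprime : IsCompactOpenPrime Y) :
    ∃ x, ∀ U, IsOpen U → IsCompact U → (Y ⊆ U ↔ x ∈ U) := by
  set F := {U : Set X | (IsOpen U ∧ IsCompact U) ∧ ¬Y ⊆ U}
  set C := (⋃₀ F)ᶜ
  have hF_directed : DirectedOn (· ⊆ ·) F := by
    rintro U ⟨hU, hYU⟩ V ⟨hV, hYV⟩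
    refine ⟨U ∪ V, ⟨⟨hU.1.union hV.1, hU.2.union hV.2⟩, fun h => ?_⟩,
      subset_union_left, subset_union_right⟩
    exact (hprime U V hU.1 hU.2 hV.1 hV.2 h).elim hYU hYV
  have hF_nonempty : Nonempty F := ⟨∅, ⟨isOpen_empty, isCompact_empty⟩, hY.not_subset_empty⟩
  -- `F` is directed because `Y` is prime, so a compact `U ⊆ ⋃₀ F` lies in a single member of `F`.
  have key : ∀ U, IsOpen U → IsCompact U → (Y ⊆ U ↔ (C ∩ U).Nonempty) := by
    refine fun U hUo hUc => ⟨fun hYU => ?_, fun ⟨z, hzC, hzU⟩ => ?_⟩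
    · rw [inter_comm, inter_compl_nonempty_iff, sUnion_eq_iUnion]
      intro hUF
      obtain ⟨V, hUV⟩ := hUc.elim_directed_cover _ (fun V => V.2.1.1) hUF
        hF_directed.directed_val
      exact V.2.2 (hYU.trans hUV)
    · by_contra hYU
      exact hzC ⟨U, ⟨⟨hUo, hUc⟩, hYU⟩, hzU⟩
  have hC_irreducible : IsIrreducible C := by
    refine ⟨by simpa using (key univ isOpen_univ isCompact_univ).1 (subset_univ Y), ?_⟩
    rintro u v hu hv ⟨z₁, hz₁C, hz₁u⟩ ⟨z₂, hz₂C, hz₂v⟩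
    obtain ⟨U₁, hU₁, hzU₁, hU₁u⟩ := hb.exists_subset_of_mem_open hz₁u hu
    obtain ⟨U₂, hU₂, hzU₂, hU₂v⟩ := hb.exists_subset_of_mem_open hz₂v hv
    have hYU₁ := (key U₁ hU₁.1 hU₁.2).2 ⟨z₁, hz₁C, hzU₁⟩
    have hYU₂ := (key U₂ hU₂.1 hU₂.2).2 ⟨z₂, hz₂C, hzU₂⟩
    obtain ⟨w, hwC, hw₁, hw₂⟩ := (key _ (hU₁.1.inter hU₂.1) (hI U₁ U₂ hU₁.1 hU₁.2 hU₂.1 hU₂.2)).1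
      (subset_inter hYU₁ hYU₂)
    exact ⟨w, hwC, hU₁u hw₁, hU₂v hw₂⟩
  have hC_closed : IsClosed C := (isOpen_sUnion fun U hU => hU.1.1).isClosed_compl
  obtain ⟨x, hx⟩ := QuasiSober.sober hC_irreducible hC_closed
  exact ⟨x, fun U hUo hUc => (key U hUo hUc).trans (hx.mem_open_set_iff hUo).symm⟩

namespace XCal

variable {X : Type*} [TopologicalSpace X]

lemma isSupIrreducible_iff {Y : XCal X} :
    IsSupIrreducible Y ↔ ∀ A B : XCal X, (A : Set X) ∪ B = Y → A = Y ∨ B = Y := by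
  simp only [IsSupIrreducible, specializes_iff]
  refine ⟨fun h A B hAB => ?_, fun h a b ha hb hsup => ?_⟩
  · exact (h A B (hAB ▸ subset_union_left) (hAB ▸ subset_union_right)
      fun Z hA hB => hAB ▸ union_subset hA hB).imp Eq.symm Eq.symm
  · let ab : XCal X := ⟨a ∪ b, a.2.1.mono subset_union_left, a.2.2.union b.2.2⟩
    have hab : (a : Set X) ∪ b = Y :=
      subset_antisymm (union_subset ha hb) (hsup ab subset_union_left subset_union_right)
    exact (h a b hab).imp Eq.symm Eq.symm

lemma isSupIrreducible_ofPoint (hb : IsTopologicalBasis {U : Set X | IsOpen U ∧ IsCompact U})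
    (x : X) : IsSupIrreducible (ofPoint hb x) := by
  refine isSupIrreducible_iff.2 fun A B hAB => ?_
  have key {A : XCal X} (hA : (A : Set X) ⊆ ofPoint hb x) (hxA : x ∈ (A : Set X)) :
      A = ofPoint hb x :=
    Subtype.ext (subset_antisymm hA (A.2.2.genOf_singleton_subset hxA))
  have hx : x ∈ (A : Set X) ∪ B := hAB ▸ mem_genOf_singleton_iff.2 specializes_rfl
  exact hx.imp (key (hAB ▸ subset_union_left)) (key (hAB ▸ subset_union_right))

lemma isCompactOpenPrime_of_isSupIrreducible
    (hI : ∀ U V : Set X, IsOpen U → IsCompact U → IsOpen V → IsCompact V → IsCompact (U ∩ V))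
    {Y : XCal X} (hY : IsSupIrreducible Y) : IsCompactOpenPrime (Y : Set X) := by
  intro U V hUo hUc hVo hVc hYUV
  by_contra! ⟨hYU, hYV⟩
  obtain ⟨u, huY, huV⟩ := not_subset.1 hYV
  obtain ⟨v, hvY, hvU⟩ := not_subset.1 hYU
  let A : XCal X := ⟨Y ∩ U, ⟨u, huY, (hYUV huY).resolve_right huV⟩, Y.2.2.inter hUo hUc hI⟩
  let B : XCal X := ⟨Y ∩ V, ⟨v, hvY, (hYUV hvY).resolve_left hvU⟩, Y.2.2.inter hVo hVc hI⟩
  have hAB : (A : Set X) ∪ B = Y := by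
    rw [← inter_union_distrib_left]
    exact inter_eq_left.2 hYUV
  rcases isSupIrreducible_iff.1 hY A B hAB with h | h
  · exact hYU (congrArg Subtype.val h ▸ inter_subset_right)
  · exact hYV (congrArg Subtype.val h ▸ inter_subset_right)

lemma range_ofPoint [CompactSpace X] [QuasiSober X]
    (hb : IsTopologicalBasis {U : Set X | IsOpen U ∧ IsCompact U})
    (hI : ∀ U V : Set X, IsOpen U → IsCompact U → IsOpen V → IsCompact V → IsCompact (U ∩ V)) :
    range (ofPoint hb) = {Y | IsSupIrreducible Y} := by
  refine subset_antisymm (range_subset_iff.2 (isSupIrreducible_ofPoint hb)) fun Y hY => ?_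
  obtain ⟨x, hx⟩ := (isCompactOpenPrime_of_isSupIrreducible hI hY).exists_forall_subset_iff_mem
    hb hI Y.2.1
  refine ⟨x, Subtype.ext ((invClosed_genOf_singleton hb x).eq_of_forall_subset_iff Y.2.2 ?_)⟩
  exact fun U hUo hUc => (genOf_singleton_subset_iff hUo).trans (hx U hUo hUc).symm

noncomputable def homeomorphSetOfIsSupIrreducible [T0Space X] [CompactSpace X] [QuasiSober X]
    (hb : IsTopologicalBasis {U : Set X | IsOpen U ∧ IsCompact U})
    (hI : ∀ U V : Set X, IsOpen U → IsCompact U → IsOpen V → IsCompact V → IsCompact (U ∩ V)) :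
    X ≃ₜ {Y : XCal X | IsSupIrreducible Y} :=
  (isEmbedding_ofPoint hb).toHomeomorph.trans (.setCongr (range_ofPoint hb hI))

end XCal

/-- Two spectral spaces `X₁` and `X₂` are homeomorphic iff `𝒳(X₁)` and
`𝒳(X₂)` are homeomorphic. -/
theorem stmt16 {X₁ X₂ : Type*} [TopologicalSpace X₁] [TopologicalSpace X₂]
    (hX₁ : IsSpectralSpace X₁) (hX₂ : IsSpectralSpace X₂) :
    Nonempty (X₁ ≃ₜ X₂) ↔ Nonempty (XCal X₁ ≃ₜ XCal X₂) := by
  obtain ⟨_, _, _, hb₁, hI₁⟩ := hX₁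
  obtain ⟨_, _, _, hb₂, hI₂⟩ := hX₂
  refine ⟨fun ⟨e⟩ => ⟨e.xcalCongr⟩, fun ⟨φ⟩ => ⟨?_⟩⟩
  exact (XCal.homeomorphSetOfIsSupIrreducible hb₁ hI₁).trans <|
    (φ.sets (ext fun _ => φ.isSupIrreducible_apply_iff.symm)).trans
      (XCal.homeomorphSetOfIsSupIrreducible hb₂ hI₂).symm
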